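/- (Regret transfer NDCG → AUC) Under the same setup with Δ_min > 0 the minimum consecutive difference of w: if Regret_NDCG ≤ ε then Regret_AUC ≤ (∑_{i=1}^{n⁺} w(i) / (n⁺ · n⁻ · Δ_min)) · ε. -/

import Mathlib

/-- Regret transfer NDCG → AUC: with Δ_min > 0 the minimum
consecutive difference, if Regret_NDCG ≤ ε then
Regret_AUC ≤ (∑ w(i) / (n⁺·n⁻·Δ_min)) · ε. -/
theorem stmt_8 (n np nm : ℕ) (hn : 2 ≤ n) (hnp : 1 ≤ np) (hnm : 1 ≤ nm)
    (hsum : np + nm = n)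
    (w : ℕ → ℝ)
    (hpos : ∀ t : ℕ, 1 ≤ t → t ≤ n → 0 < w t)
    (hdec : ∀ t : ℕ, 1 ≤ t → t < n → w (t + 1) < w t)
    (r : ℕ → ℕ)
    (hrlo : 1 ≤ r 1) (hrhi : r np ≤ n)
    (hri : ∀ i : ℕ, 1 ≤ i → i ≤ np → i ≤ r i)
    (hmono : ∀ i j : ℕ, 1 ≤ i → i < j → j ≤ np → r i < r j)
    (ε : ℝ)
    (hNDCG : (∑ i ∈ Finset.Icc 1 np, (w i - w (r i))) /
              (∑ i ∈ Finset.Icc 1 np, w i) ≤ ε) :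
    (∑ i ∈ Finset.Icc 1 np, ((r i : ℝ) - (i : ℝ))) / ((np : ℝ) * nm) ≤
      ((∑ i ∈ Finset.Icc 1 np, w i) /
        ((np : ℝ) * nm *
          ((Finset.Ico 1 n).inf' (by simp; omega) (fun t => w t - w (t + 1))))) * ε := by
  set Δ := (Finset.Ico 1 n).inf' (by simp; omega) (fun t => w t - w (t + 1)) with hΔdef
  have hΔpos : 0 < Δ := by
    rw [hΔdef, Finset.lt_inf'_iff]
    intro t ht
    simp only [Finset.mem_Ico] at ht
    have := hdec t ht.1 ht.2
    linarith
  have hΔle : ∀ t, 1 ≤ t → t < n → Δ ≤ w t - w (t + 1) := by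
    intro t h1 h2
    exact Finset.inf'_le _ (by simp [Finset.mem_Ico]; omega)
  -- key: w a - w b ≥ (b-a) Δ
  have key : ∀ a b : ℕ, 1 ≤ a → a ≤ b → b ≤ n → ((b : ℝ) - a) * Δ ≤ w a - w b := by
    intro a b ha hab hbn
    induction b, hab using Nat.le_induction with
    | base => simp
    | succ b hab ih =>
      have hbn' : b < n := by omega
      have h1 := hΔle b (by omega) hbn'
      have h2 := ih (by omega)
      push_cast
      nlinarith
  have hrn : ∀ i, 1 ≤ i → i ≤ np → r i ≤ n := by
    intro i h1 h2
    rcases eq_or_lt_of_le h2 with h | h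
    · subst h; exact hrhi
    · exact le_of_lt (lt_of_lt_of_le (hmono i np h1 h le_rfl) hrhi)
  have hterm : ∀ i ∈ Finset.Icc 1 np, ((r i : ℝ) - i) * Δ ≤ w i - w (r i) := by
    intro i hi
    simp only [Finset.mem_Icc] at hi
    exact key i (r i) hi.1 (hri i hi.1 hi.2) (hrn i hi.1 hi.2)
  have hsumkey : (∑ i ∈ Finset.Icc 1 np, ((r i : ℝ) - i)) * Δ ≤
      ∑ i ∈ Finset.Icc 1 np, (w i - w (r i)) := by
    rw [Finset.sum_mul]
    exact Finset.sum_le_sum hterm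
  have hSpos : 0 < ∑ i ∈ Finset.Icc 1 np, w i := by
    apply Finset.sum_pos
    · intro i hi
      simp only [Finset.mem_Icc] at hi
      exact hpos i hi.1 (by omega)
    · exact ⟨1, by simp [Finset.mem_Icc]; omega⟩
  have hN : (∑ i ∈ Finset.Icc 1 np, (w i - w (r i))) ≤ ε * ∑ i ∈ Finset.Icc 1 np, w i := by
    rw [div_le_iff₀ hSpos] at hNDCG
    linarith
  have hnpnm : (0 : ℝ) < (np : ℝ) * nm := by
    have h1 : (0:ℝ) < np := by exact_mod_cast hnp
    have h2 : (0:ℝ) < nm := by exact_mod_cast hnm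
    positivity
  rw [div_le_iff₀ hnpnm]
  have hfinal : (∑ i ∈ Finset.Icc 1 np, ((r i : ℝ) - i)) * Δ ≤
      ε * ∑ i ∈ Finset.Icc 1 np, w i := le_trans hsumkey hN
  have hεnn : 0 ≤ ε * ∑ i ∈ Finset.Icc 1 np, w i := by
    refine le_trans ?_ hfinal
    apply mul_nonneg _ hΔpos.le
    apply Finset.sum_nonneg
    intro i hi
    simp only [Finset.mem_Icc] at hi
    have := hri i hi.1 hi.2
    have : (i : ℝ) ≤ r i := by exact_mod_cast this
    linarith
  rw [div_mul_eq_mul_div, div_mul_eq_mul_div, le_div_iff₀ (mul_pos hnpnm hΔpos)]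
  calc (∑ i ∈ Finset.Icc 1 np, ((r i : ℝ) - i)) * ((np : ℝ) * nm * Δ)
      = ((∑ i ∈ Finset.Icc 1 np, ((r i : ℝ) - i)) * Δ) * ((np : ℝ) * nm) := by ring
    _ ≤ (ε * ∑ i ∈ Finset.Icc 1 np, w i) * ((np : ℝ) * nm) := by
        exact mul_le_mul_of_nonneg_right hfinal (le_of_lt hnpnm)
    _ = (∑ i ∈ Finset.Icc 1 np, w i) * ε * ((np : ℝ) * nm) := by ring
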